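/- arXiv:0710.1975 — 2 statements merged into one kernel-verified Lean document; each statement's English description precedes it below -/
import Mathlib

section
/- For n ≥ 2 and 0 < r < π, the function r ↦ (∫_0^r sin^{n-1}(t) dt) / sin^{n-1}(r) is strictly increasing on (0, π). -/
open Real Set

/-!
Write `m = n - 1` and `F r = ∫₀ʳ sin^m`. The derivative of `F / sin^m` has the sign of
`sin^{m+1} r - m cos r F r`. Since `cos` decreases on `[0, π]`,
`cos r F r ≤ ∫₀ʳ sin^m t cos t dt = sin^{m+1} r / (m + 1)`, so this is at least
`sin^{m+1} r / (m + 1) > 0`.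
-/

theorem integral_sin_pow_mul_cos (m : ℕ) (r : ℝ) :
    ∫ t in (0:ℝ)..r, sin t ^ m * cos t = sin r ^ (m + 1) / (m + 1) := by
  simpa using integral_sin_pow_mul_cos_pow_odd (a := 0) (b := r) m 0

theorem cos_mul_integral_sin_pow_le (m : ℕ) {r : ℝ} (hr₀ : 0 ≤ r) (hrπ : r ≤ π) :
    cos r * ∫ t in (0:ℝ)..r, sin t ^ m ≤ sin r ^ (m + 1) / (m + 1) := by
  rw [← intervalIntegral.integral_const_mul, ← integral_sin_pow_mul_cos]
  refine intervalIntegral.integral_mono_on hr₀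
    ((continuous_const.mul (by fun_prop)).intervalIntegrable _ _)
    (Continuous.intervalIntegrable (by fun_prop) _ _) fun t ht => ?_
  have hsin : 0 ≤ sin t ^ m := pow_nonneg (sin_nonneg_of_nonneg_of_le_pi ht.1 (ht.2.trans hrπ)) m
  have hcos : cos r ≤ cos t := cos_le_cos_of_nonneg_of_le_pi ht.1 hrπ ht.2
  nlinarith

theorem natCast_mul_cos_mul_integral_sin_pow_lt (m : ℕ) {r : ℝ} (hr : r ∈ Ioo 0 π) :
    m * cos r * (∫ t in (0:ℝ)..r, sin t ^ m) < sin r ^ (m + 1) := by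
  have hs : 0 < sin r ^ (m + 1) := pow_pos (sin_pos_of_pos_of_lt_pi hr.1 hr.2) _
  calc m * cos r * (∫ t in (0:ℝ)..r, sin t ^ m)
      ≤ m * (sin r ^ (m + 1) / (m + 1)) := by
        rw [mul_assoc]
        exact mul_le_mul_of_nonneg_left (cos_mul_integral_sin_pow_le m hr.1.le hr.2.le)
          m.cast_nonneg
    _ < sin r ^ (m + 1) := by
        rw [mul_div_assoc', div_lt_iff₀ (by positivity)]
        linarith

theorem hasDerivAt_integral_sin_pow (m : ℕ) (r : ℝ) :
    HasDerivAt (fun u => ∫ t in (0:ℝ)..u, sin t ^ m) (sin r ^ m) r :=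
  intervalIntegral.integral_hasDerivAt_right
    (Continuous.intervalIntegrable (by fun_prop) _ _)
    (Continuous.stronglyMeasurableAtFilter (by fun_prop) _ _) (by fun_prop)

theorem strictMonoOn_integral_sin_pow_div_sin_pow (m : ℕ) :
    StrictMonoOn (fun r => (∫ t in (0:ℝ)..r, sin t ^ m) / sin r ^ m) (Ioo 0 π) := by
  set F := fun u => ∫ t in (0:ℝ)..u, sin t ^ m
  have hderiv : ∀ r ∈ Ioo 0 π, HasDerivAt (fun r => F r / sin r ^ m)
      ((sin r ^ m * sin r ^ m - F r * (m * sin r ^ (m - 1) * cos r)) / (sin r ^ m) ^ 2) r :=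
    fun r hr => (hasDerivAt_integral_sin_pow m r).div ((hasDerivAt_sin r).pow m)
      (pow_pos (sin_pos_of_pos_of_lt_pi hr.1 hr.2) m).ne'
  refine strictMonoOn_of_deriv_pos (convex_Ioo 0 π)
    (fun r hr => (hderiv r hr).continuousAt.continuousWithinAt) fun r hr => ?_
  rw [interior_Ioo] at hr
  rw [(hderiv r hr).deriv]
  have hsin : 0 < sin r := sin_pos_of_pos_of_lt_pi hr.1 hr.2
  -- multiplying by `sin r` absorbs the exponent `m - 1`, truncated at `m = 0`
  have hnum : (sin r ^ m * sin r ^ m - F r * (m * sin r ^ (m - 1) * cos r)) * sin r =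
      sin r ^ m * (sin r ^ (m + 1) - m * cos r * F r) := by
    cases m with
    | zero => simp
    | succ k => simp only [Nat.add_sub_cancel]; push_cast; ring
  have hpos : 0 < sin r ^ m * (sin r ^ (m + 1) - m * cos r * F r) :=
    mul_pos (pow_pos hsin m) (sub_pos.2 (natCast_mul_cos_mul_integral_sin_pow_lt m hr))
  exact div_pos (pos_of_mul_pos_left (hnum ▸ hpos) hsin.le) (by positivity)

theorem cap_ratio_strictMonoOn_general (n : ℕ) :
    StrictMonoOn
      (fun r : ℝ => (∫ t in (0:ℝ)..r, Real.sin t ^ (n - 1)) / Real.sin r ^ (n - 1))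
      (Set.Ioo 0 Real.pi) :=
  strictMonoOn_integral_sin_pow_div_sin_pow (n - 1)

/-- For `n ≥ 2`, the volume-to-perimeter ratio of spherical caps in the unit `n`-sphere,
`r ↦ (∫₀ʳ sin^{n-1} t dt) / sin^{n-1} r`, is strictly increasing on `(0, π)`. -/
theorem cap_ratio_strictMonoOn (n : ℕ) (hn : 2 ≤ n) :
    StrictMonoOn
      (fun r : ℝ => (∫ t in (0:ℝ)..r, Real.sin t ^ (n - 1)) / Real.sin r ^ (n - 1))
      (Set.Ioo 0 Real.pi) :=
  cap_ratio_strictMonoOn_general n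
end

section
/- Let f(t) = cos(t) - h·sin(t) for a real constant h ≥ cot(r_0) with 0 < r_0 < π. Then the first positive zero t_0 of f satisfies t_0 ≤ r_0, and ∫_0^{t_0} max(f(t),0)^{n-1} dt ≤ ∫_0^{r_0} (cos t - cot(r_0) sin t)^{n-1} dt for n ≥ 2. -/
/-!
On `[0, r₀]` the comparison function `cos t - cot r₀ · sin t = sin (r₀ - t) / sin r₀` is
nonnegative and vanishes at `r₀`. Since `sin t ≥ 0` there, `h ≥ cot r₀` gives
`f t ≤ cos t - cot r₀ · sin t`, so `f r₀ ≤ 0` and, as `f 0 = 1`, the intermediate value theorem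
puts the first zero of `f` in `(0, r₀]`. The integral bound then follows by comparing the
integrands on `[0, t₀]` and enlarging the interval to `[0, r₀]`.
-/

open Real Set intervalIntegral

lemma cos_sub_cot_mul_sin_eq {r : ℝ} (hr : sin r ≠ 0) (t : ℝ) :
    cos t - cot r * sin t = sin (r - t) / sin r := by
  rw [sin_sub, cot_eq_cos_div_sin]
  field_simp

lemma cos_sub_cot_mul_sin_nonneg {r t : ℝ} (hr : 0 < r) (hr' : r < π) (ht : t ∈ Icc 0 r) :
    0 ≤ cos t - cot r * sin t := by
  have hsin : 0 < sin r := sin_pos_of_pos_of_lt_pi hr hr'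
  rw [cos_sub_cot_mul_sin_eq hsin.ne']
  exact div_nonneg (sin_nonneg_of_nonneg_of_le_pi (by linarith [ht.2]) (by linarith [ht.1]))
    hsin.le

lemma cos_sub_mul_sin_le_of_le {c h t : ℝ} (hch : c ≤ h) (ht : 0 ≤ sin t) :
    cos t - h * sin t ≤ cos t - c * sin t := by
  nlinarith

lemma max_cos_sub_mul_sin_le {h r t : ℝ} (hr : 0 < r) (hr' : r < π) (hh : cot r ≤ h)
    (ht : t ∈ Icc 0 r) : max (cos t - h * sin t) 0 ≤ cos t - cot r * sin t :=
  max_le (cos_sub_mul_sin_le_of_le hh (sin_nonneg_of_nonneg_of_le_pi ht.1 (by linarith [ht.2])))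
    (cos_sub_cot_mul_sin_nonneg hr hr' ht)

lemma le_of_ne_zero_of_nonpos {f : ℝ → ℝ} {r t₀ : ℝ} (hf : ContinuousOn f (Icc 0 r))
    (hr : 0 ≤ r) (h0 : 0 < f 0) (hfr : f r ≤ 0) (hne : ∀ t ∈ Ioo 0 t₀, f t ≠ 0) :
    t₀ ≤ r := by
  by_contra! hlt
  obtain ⟨s, hs, hfs⟩ := intermediate_value_Icc' hr hf ⟨hfr, h0.le⟩
  have hs0 : 0 < s := hs.1.lt_of_ne (by rintro rfl; exact h0.ne' hfs)
  exact hne s ⟨hs0, hs.2.trans_lt hlt⟩ hfs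

theorem heintze_karcher_one_dim_general (n : ℕ) (h r₀ t₀ : ℝ)
    (hr₀ : 0 < r₀) (hr₀' : r₀ < Real.pi) (hh : Real.cot r₀ ≤ h)
    (f : ℝ → ℝ) (hf : ∀ t, f t = Real.cos t - h * Real.sin t)
    (ht₀ : 0 < t₀)
    (hfirst : ∀ t, 0 < t → t < t₀ → f t ≠ 0) :
    t₀ ≤ r₀ ∧
      (∫ t in (0:ℝ)..t₀, max (f t) 0 ^ (n - 1)) ≤
        ∫ t in (0:ℝ)..r₀, (Real.cos t - Real.cot r₀ * Real.sin t) ^ (n - 1) := by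
  obtain rfl : f = fun t => cos t - h * sin t := funext hf
  have hr₀_mem : r₀ ∈ Icc 0 r₀ := ⟨hr₀.le, le_rfl⟩
  have hfr₀ : cos r₀ - h * sin r₀ ≤ 0 := by
    simpa [cos_sub_cot_mul_sin_eq (sin_pos_of_pos_of_lt_pi hr₀ hr₀').ne'] using
      (le_max_left _ _).trans (max_cos_sub_mul_sin_le hr₀ hr₀' hh hr₀_mem)
  have ht₀r₀ : t₀ ≤ r₀ :=
    le_of_ne_zero_of_nonpos (by fun_prop) hr₀.le (by simp) hfr₀ fun t ht => hfirst t ht.1 ht.2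
  refine ⟨ht₀r₀, ?_⟩
  calc (∫ t in (0:ℝ)..t₀, max (cos t - h * sin t) 0 ^ (n - 1))
      ≤ ∫ t in (0:ℝ)..t₀, (cos t - cot r₀ * sin t) ^ (n - 1) :=
        integral_mono_on ht₀.le (by apply Continuous.intervalIntegrable; fun_prop)
          (by apply Continuous.intervalIntegrable; fun_prop) fun t ht =>
            pow_le_pow_left₀ (le_max_right _ _)
              (max_cos_sub_mul_sin_le hr₀ hr₀' hh ⟨ht.1, ht.2.trans ht₀r₀⟩) _
    _ ≤ ∫ t in (0:ℝ)..r₀, (cos t - cot r₀ * sin t) ^ (n - 1) := by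
        refine integral_mono_interval le_rfl ht₀.le ht₀r₀ ?_
          (by apply Continuous.intervalIntegrable; fun_prop)
        filter_upwards [MeasureTheory.ae_restrict_mem measurableSet_Ioc] with t ht
        exact pow_nonneg (cos_sub_cot_mul_sin_nonneg hr₀ hr₀' ⟨ht.1.le, ht.2⟩) _

/-- One-dimensional Heintze–Karcher comparison: for `f t = cos t - h sin t` with
`h ≥ cot r₀`, `0 < r₀ < π`, the first positive zero `t₀` of `f` satisfies `t₀ ≤ r₀`, and
`∫₀^{t₀} (f t)₊^{n-1} dt ≤ ∫₀^{r₀} (cos t - cot r₀ · sin t)^{n-1} dt` for `n ≥ 2`. -/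
theorem heintze_karcher_one_dim (n : ℕ) (hn : 2 ≤ n) (h r₀ t₀ : ℝ)
    (hr₀ : 0 < r₀) (hr₀' : r₀ < Real.pi) (hh : Real.cot r₀ ≤ h)
    (f : ℝ → ℝ) (hf : ∀ t, f t = Real.cos t - h * Real.sin t)
    (ht₀ : 0 < t₀) (hzero : f t₀ = 0)
    (hfirst : ∀ t, 0 < t → t < t₀ → f t ≠ 0) :
    t₀ ≤ r₀ ∧
      (∫ t in (0:ℝ)..t₀, max (f t) 0 ^ (n - 1)) ≤
        ∫ t in (0:ℝ)..r₀, (Real.cos t - Real.cot r₀ * Real.sin t) ^ (n - 1) :=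
  heintze_karcher_one_dim_general n h r₀ t₀ hr₀ hr₀' hh f hf ht₀ hfirst
end
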